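/- arXiv:1508.03210 — 6 statements merged into one kernel-verified Lean document; each statement's English description precedes it below -/
import Mathlib

section
/- Let α₁, α₂, β₁, β₂ ∈ ℂ. The identity (∂+λ+2μ)(∂+β₁λ+β₂) = ((α₁−1)λ−μ+α₂)(∂+2λ+2μ) + (∂+α₁λ+μ+α₂)(∂+2μ) holds in the polynomial ring ℂ[∂,λ,μ] if and only if β₂ = 2α₂ and β₁ = 2(α₁−1). -/
/-!
Statement 1: the identity
(∂+λ+2μ)(∂+β₁λ+β₂) = ((α₁−1)λ−μ+α₂)(∂+2λ+2μ) + (∂+α₁λ+μ+α₂)(∂+2μ)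
holds in ℂ[∂,λ,μ] iff β₂ = 2α₂ and β₁ = 2(α₁−1).
Variables: ∂ = X 0, λ = X 1, μ = X 2 in `MvPolynomial (Fin 3) ℂ`.
-/

open MvPolynomial

theorem jacobi_LYY_identity_iff (α₁ α₂ β₁ β₂ : ℂ) :
    (((X 0 + X 1 + 2 * X 2) * (X 0 + C β₁ * X 1 + C β₂) : MvPolynomial (Fin 3) ℂ)
        = (C (α₁ - 1) * X 1 - X 2 + C α₂) * (X 0 + 2 * X 1 + 2 * X 2)
          + (X 0 + C α₁ * X 1 + X 2 + C α₂) * (X 0 + 2 * X 2))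
      ↔ (β₂ = 2 * α₂ ∧ β₁ = 2 * (α₁ - 1)) := by
  constructor
  · intro h
    have h1 := congrArg (eval (fun i : Fin 3 => if i = 0 then (1 : ℂ) else 0)) h
    have h2 := congrArg (eval (fun i : Fin 3 => if i = 1 then (1 : ℂ) else 0)) h
    simp [eval_X, eval_C] at h1 h2
    constructor
    · linear_combination h1
    · linear_combination h2 - h1
  · rintro ⟨rfl, rfl⟩
    simp only [map_mul, map_sub, map_add, map_one, map_ofNat]
    ring
end

section
/- For every c ∈ ℂ, TSV(c) is a Lie conformal algebra; that is, the λ-brackets [L_λ L] = (∂+2λ)L, [L_λ Y] = (∂+(3/2)λ+c)Y, [L_λ M] = (∂+2c)M, [Y_λ Y] = (∂+2λ)(−∂−2c)M, [Y_λ M] = [M_λ M] = 0, extended by conformal sesquilinearity and skew-symmetry, satisfy the axioms of a Lie conformal algebra on the free ℂ[∂]-module ℂ[∂]L ⊕ ℂ[∂]M ⊕ ℂ[∂]Y. -/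
noncomputable section
open Polynomial

abbrev R3 : Type := Fin 3 → Polynomial ℂ
abbrev P2 : Type := Polynomial (Polynomial ℂ)
abbrev P3 : Type := Polynomial P2

/-- The sesquilinear extension of generator λ-brackets `g` (generators indexed
L = 0, Y = 1, M = 2): `[P(∂)e_i λ Q(∂)e_j] = P(-λ) Q(λ+∂) [e_i λ e_j]`.
In `P2`, ∂ is the inner variable (`C X`) and λ the outer one (`X`). -/
def brkt (g : Fin 3 → Fin 3 → Fin 3 → P2) (x y : R3) : Fin 3 → P2 := fun k =>
  ∑ i : Fin 3, ∑ j : Fin 3,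
    aeval (-(X : P2)) (x i) * aeval ((X : P2) + C X) (y j) * g i j k

/-- The (finite) set of λ-degrees appearing in an element of R[λ]. -/
def msupp (w : Fin 3 → P2) : Finset ℕ := Finset.univ.biUnion fun i => (w i).support

/-- The coefficient of λ^n of an element of R[λ], an element of R. -/
def mcoeff (w : Fin 3 → P2) (n : ℕ) : R3 := fun i => (w i).coeff n

/-- Embed an element of R[ν] = ℂ[∂][ν] into ℂ[∂][λ][μ], substituting `s` for ν
(`∂` is sent to the innermost variable of `P3`). -/
def sub2 (s : P3) (p : P2) : P3 := p.eval₂ (Polynomial.C.comp Polynomial.C) s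

/-- The generators L, Y, M of the rank-3 free ℂ[∂]-module. -/
def eL : R3 := ![1, 0, 0]
def eY : R3 := ![0, 1, 0]
def eM : R3 := ![0, 0, 1]

/-- The generator λ-brackets of the Lie conformal algebra `TSV(a,b)`:
`[L_λ L] = (∂+2λ)L`, `[L_λ Y] = (∂+aλ+b)Y`, `[L_λ M] = (∂+2(a−1)λ+2b)M`,
`[Y_λ Y] = (∂+2λ)M`, `[Y_λ M] = [M_λ M] = 0`, and the brackets `[Y_λ L]`,
`[M_λ L]`, `[M_λ Y]` determined by skew-symmetry. -/
def gbrAB (a b : ℂ) : Fin 3 → Fin 3 → Fin 3 → P2 :=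
  ![![![C X + 2 * X, 0, 0],
     ![0, C X + C (C a) * X + C (C b), 0],
     ![0, 0, C X + C (C (2 * (a - 1))) * X + C (C (2 * b))]],
    ![![0, C (C (a - 1) * X) + C (C a) * X - C (C b), 0],
     ![0, 0, C X + 2 * X],
     ![0, 0, 0]],
    ![![0, 0, C (C (2 * a - 3) * X) + C (C (2 * (a - 1))) * X - C (C (2 * b))],
     ![0, 0, 0],
     ![0, 0, 0]]]

/-- The generator λ-brackets of the Lie conformal algebra `TSV(c)`:
`[L_λ L] = (∂+2λ)L`, `[L_λ Y] = (∂+(3/2)λ+c)Y`, `[L_λ M] = (∂+2c)M`,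
`[Y_λ Y] = (∂+2λ)(−∂−2c)M`, `[Y_λ M] = [M_λ M] = 0`, and the brackets `[Y_λ L]`,
`[M_λ L]`, `[M_λ Y]` determined by skew-symmetry. -/
def gbrC (c : ℂ) : Fin 3 → Fin 3 → Fin 3 → P2 :=
  ![![![C X + 2 * X, 0, 0],
     ![0, C X + C (C (3 / 2)) * X + C (C c), 0],
     ![0, 0, C X + C (C (2 * c))]],
    ![![0, C (C (1 / 2) * X) + C (C (3 / 2)) * X - C (C c), 0],
     ![0, 0, (C X + 2 * X) * (-(C X : P2) - C (C (2 * c)))],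
     ![0, 0, 0]],
    ![![0, 0, -(C X : P2) - C (C (2 * c))],
     ![0, 0, 0],
     ![0, 0, 0]]]

-- ## generic hom-through-aeval
lemma aeval_hom {S T : Type*} [CommSemiring S] [CommSemiring T] [Algebra ℂ S] [Algebra ℂ T]
    (Φ : S →+* T) (h : ∀ a : ℂ, Φ (algebraMap ℂ S a) = algebraMap ℂ T a)
    (u : S) (q : Polynomial ℂ) : Φ (aeval u q) = aeval (Φ u) q := by
  rw [aeval_def, aeval_def, Polynomial.hom_eval₂]
  congr 1
  exact RingHom.ext h

-- ## the homs
def sb (s : P3) : P2 →+* P3 := eval₂RingHom (Polynomial.C.comp Polynomial.C) s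
def subst (t T : P3) : P2 →+* P3 := eval₂RingHom ((aeval t : Polynomial ℂ →ₐ[ℂ] P3).toRingHom) T
def sk : P2 →+* P2 := eval₂RingHom Polynomial.C (-(X : P2) - C X)

lemma sub2_sb (s : P3) (p : P2) : sub2 s p = sb s p := rfl

@[simp] lemma sb_C (s : P3) (r : Polynomial ℂ) : sb s (C r) = C (C r) := by simp [sb]
@[simp] lemma sb_X (s : P3) : sb s X = s := by simp [sb]
@[simp] lemma sb_aeval (s : P3) (u : P2) (q : Polynomial ℂ) :
    sb s (aeval u q) = aeval (sb s u) q :=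
  aeval_hom _ (fun a => by simp [sb, Polynomial.algebraMap_apply]) u q

@[simp] lemma subst_C (t T : P3) (r : Polynomial ℂ) : subst t T (C r) = aeval t r := by
  simp [subst]
@[simp] lemma subst_X (t T : P3) : subst t T X = T := by simp [subst]
@[simp] lemma subst_aeval (t T : P3) (u : P2) (q : Polynomial ℂ) :
    subst t T (aeval u q) = aeval (subst t T u) q :=
  aeval_hom _ (fun a => by simp [subst, Polynomial.algebraMap_apply]) u q

@[simp] lemma sk_C (r : Polynomial ℂ) : sk (C r) = C r := by simp [sk]
@[simp] lemma sk_X : sk X = -(X : P2) - C X := by simp [sk]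
@[simp] lemma sk_aeval (u : P2) (q : Polynomial ℂ) :
    sk (aeval u q) = aeval (sk u) q :=
  aeval_hom _ (fun a => by simp [sk, Polynomial.algebraMap_apply]) u q

-- ## evaluation extensionality
def e2 (u v : ℂ) : P2 →+* ℂ := (evalRingHom v).comp (mapRingHom (evalRingHom u))
def e3 (u v w : ℂ) : P3 →+* ℂ :=
  (evalRingHom w).comp ((mapRingHom (evalRingHom v)).comp (mapRingHom (mapRingHom (evalRingHom u))))

lemma extC {p q : Polynomial ℂ} (h : ∀ u : ℂ, eval u p = eval u q) : p = q :=
  Polynomial.funext h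

lemma extP2 {p q : P2} (h : ∀ u v : ℂ, e2 u v p = e2 u v q) : p = q := by
  refine Polynomial.ext fun n => extC fun u => ?_
  have h2 : p.map (evalRingHom u) = q.map (evalRingHom u) :=
    Polynomial.funext fun v => by simpa [e2] using h u v
  simpa [coeff_map] using congrArg (fun r => Polynomial.coeff r n) h2

lemma extP3 {p q : P3} (h : ∀ u v w : ℂ, e3 u v w p = e3 u v w q) : p = q := by
  refine Polynomial.ext fun n => extP2 fun u v => ?_
  have h2 : p.map ((evalRingHom v).comp (mapRingHom (evalRingHom u))) =
      q.map ((evalRingHom v).comp (mapRingHom (evalRingHom u))) :=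
    Polynomial.funext fun w => by simpa [e3, Polynomial.map_map] using h u v w
  have h3 := congrArg (fun r => Polynomial.coeff r n) h2
  simp only [coeff_map] at h3
  simpa [e2] using h3

@[simp] lemma e2_C (u v : ℂ) (r : Polynomial ℂ) : e2 u v (C r) = eval u r := by simp [e2]
@[simp] lemma e2_X (u v : ℂ) : e2 u v X = v := by simp [e2]
@[simp] lemma e2_aeval (u v : ℂ) (s : P2) (q : Polynomial ℂ) :
    e2 u v (aeval s q) = eval (e2 u v s) q := by
  rw [aeval_hom _ (fun a => by simp [e2, Polynomial.algebraMap_apply]) s q]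
  simp

@[simp] lemma e3_C2 (u v w : ℂ) (r : Polynomial ℂ) : e3 u v w (C (C r)) = eval u r := by
  simp [e3]
@[simp] lemma e3_CX (u v w : ℂ) : e3 u v w (C X) = v := by simp [e3]
@[simp] lemma e3_X (u v w : ℂ) : e3 u v w X = w := by simp [e3]
@[simp] lemma e3_aeval (u v w : ℂ) (s : P3) (q : Polynomial ℂ) :
    e3 u v w (aeval s q) = eval (e3 u v w s) q := by
  rw [aeval_hom _ (fun a => by simp [e3, Polynomial.algebraMap_apply]) s q]
  simp


@[simp] lemma sb_neg (s : P3) (p : P2) : sb s (-p) = -(sb s p) := by rw [map_neg]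
@[simp] lemma sb_sub (s : P3) (p q : P2) : sb s (p - q) = sb s p - sb s q := by rw [map_sub]
@[simp] lemma subst_neg (t T : P3) (p : P2) : subst t T (-p) = -(subst t T p) := by rw [map_neg]
@[simp] lemma subst_sub (t T : P3) (p q : P2) : subst t T (p - q) = subst t T p - subst t T q := by rw [map_sub]
@[simp] lemma sk_neg (p : P2) : sk (-p) = -(sk p) := by rw [map_neg]
@[simp] lemma sk_sub (p q : P2) : sk (p - q) = sk p - sk q := by rw [map_sub]
@[simp] lemma e2_neg (u v : ℂ) (p : P2) : e2 u v (-p) = -(e2 u v p) := by rw [map_neg]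
@[simp] lemma e2_sub (u v : ℂ) (p q : P2) : e2 u v (p - q) = e2 u v p - e2 u v q := by rw [map_sub]
@[simp] lemma e3_neg (u v w : ℂ) (p : P3) : e3 u v w (-p) = -(e3 u v w p) := by rw [map_neg (e3 u v w)]
@[simp] lemma e3_sub (u v w : ℂ) (p q : P3) : e3 u v w (p - q) = e3 u v w p - e3 u v w q := by rw [map_sub (e3 u v w)]
@[simp] lemma e3_algebraMap (u v w a : ℂ) : e3 u v w (algebraMap ℂ P3 a) = a := by
  simp [e3, Polynomial.algebraMap_apply]
@[simp] lemma e2_algebraMap (u v a : ℂ) : e2 u v (algebraMap ℂ P2 a) = a := by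
  simp [e2, Polynomial.algebraMap_apply]

-- ## collapsing coefficient sums
lemma coeff_sum_eq (w : Fin 3 → P2) (j : Fin 3) (t T : P3) :
    ∑ n ∈ msupp w, T ^ n * aeval t ((w j).coeff n) = subst t T (w j) := by
  have hsub : (w j).support ⊆ msupp w := fun n hn =>
    Finset.mem_biUnion.2 ⟨j, Finset.mem_univ j, hn⟩
  have : subst t T (w j) = ∑ n ∈ (w j).support, aeval t ((w j).coeff n) * T ^ n := by
    rw [subst, coe_eval₂RingHom, eval₂_eq_sum, Polynomial.sum]
    rfl
  rw [this, Finset.sum_subset hsub (fun n _ hn => by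
    simp [Polynomial.notMem_support_iff.1 hn])]
  exact Finset.sum_congr rfl fun n _ => by ring

lemma collapse₂ (g : Fin 3 → Fin 3 → Fin 3 → P2) (x : R3) (w : Fin 3 → P2) (k : Fin 3)
    (s T : P3) :
    ∑ n ∈ msupp w, T ^ n * sb s (brkt g x (mcoeff w n) k)
      = ∑ i : Fin 3, ∑ j : Fin 3,
          aeval (-s) (x i) * subst (s + C (C X)) T (w j) * sb s (g i j k) := by
  simp only [brkt, mcoeff, map_sum, map_mul, sb_aeval, map_neg, map_add, sb_X, sb_C,
    Finset.mul_sum]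
  rw [Finset.sum_comm]
  refine Finset.sum_congr rfl fun i _ => ?_
  rw [Finset.sum_comm]
  refine Finset.sum_congr rfl fun j _ => ?_
  rw [← coeff_sum_eq w j (s + C (C X)) T]
  conv_rhs => rw [Finset.mul_sum, Finset.sum_mul]
  exact Finset.sum_congr rfl fun n _ => by ring

lemma collapse₁ (g : Fin 3 → Fin 3 → Fin 3 → P2) (w : Fin 3 → P2) (z : R3) (k : Fin 3)
    (s T : P3) :
    ∑ n ∈ msupp w, T ^ n * sb s (brkt g (mcoeff w n) z k)
      = ∑ i : Fin 3, ∑ j : Fin 3,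
          subst (-s) T (w i) * aeval (s + C (C X)) (z j) * sb s (g i j k) := by
  simp only [brkt, mcoeff, map_sum, map_mul, sb_aeval, map_neg, map_add, sb_X, sb_C,
    Finset.mul_sum]
  rw [Finset.sum_comm]
  refine Finset.sum_congr rfl fun i _ => ?_
  rw [Finset.sum_comm]
  refine Finset.sum_congr rfl fun j _ => ?_
  rw [← coeff_sum_eq w i (-s) T]
  conv_rhs => rw [Finset.sum_mul, Finset.sum_mul]
  exact Finset.sum_congr rfl fun n _ => by ring

lemma subst_brkt (t T : P3) (g : Fin 3 → Fin 3 → Fin 3 → P2) (y z : R3) (m : Fin 3) :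
    subst t T (brkt g y z m)
      = ∑ i : Fin 3, ∑ j : Fin 3,
          aeval (-T) (y i) * aeval (T + t) (z j) * subst t T (g i j m) := by
  simp [brkt, map_sum, map_mul, subst_aeval, map_neg, map_add]

/-- The axioms of a Lie conformal algebra for the bracket `brkt g`: conformal
sesquilinearity `[∂a_λ b] = -λ[a_λ b]`, `[a_λ ∂b] = (λ+∂)[a_λ b]`, skew-symmetry
`[a_λ b] = -[b_{-λ-∂} a]`, and the Jacobi identity
`[a_λ[b_μ c]] = [[a_λ b]_{λ+μ} c] + [b_μ[a_λ c]]` (an identity in R[λ,μ],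
with λ the middle and μ the outer variable of `P3`). -/
def IsLieConformal (g : Fin 3 → Fin 3 → Fin 3 → P2) : Prop :=
  (∀ (x y : R3) (k : Fin 3), brkt g ((X : Polynomial ℂ) • x) y k = -(X * brkt g x y k)) ∧
  (∀ (x y : R3) (k : Fin 3), brkt g x ((X : Polynomial ℂ) • y) k = (X + C X) * brkt g x y k) ∧
  (∀ (x y : R3) (k : Fin 3),
    brkt g x y k = -(brkt g y x k).eval₂ Polynomial.C (-(X : P2) - C X)) ∧
  (∀ (x y z : R3) (k : Fin 3),
    (∑ n ∈ msupp (brkt g y z), (X : P3) ^ n * sub2 (C X) (brkt g x (mcoeff (brkt g y z) n) k))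
      = (∑ m ∈ msupp (brkt g x y),
          (C (X : P2) : P3) ^ m * sub2 (C X + X) (brkt g (mcoeff (brkt g x y) m) z k))
        + ∑ m ∈ msupp (brkt g x z),
            (C (X : P2) : P3) ^ m * sub2 X (brkt g y (mcoeff (brkt g x z) m) k))

set_option maxHeartbeats 4000000 in
/-- For every c ∈ ℂ, `TSV(c)` is a Lie conformal algebra. -/
theorem TSVc_isLieConformal (c : ℂ) : IsLieConformal (gbrC c) := by
  refine ⟨fun x y k => ?_, fun x y k => ?_, fun x y k => ?_, fun x y z k => ?_⟩
  · simp only [brkt, Pi.smul_apply, smul_eq_mul, map_mul, aeval_X, Finset.mul_sum,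
      ← Finset.sum_neg_distrib]
    exact Finset.sum_congr rfl fun i _ => Finset.sum_congr rfl fun j _ => by ring
  · simp only [brkt, Pi.smul_apply, smul_eq_mul, map_mul, aeval_X, Finset.mul_sum]
    exact Finset.sum_congr rfl fun i _ => Finset.sum_congr rfl fun j _ => by ring
  · have hrw : (brkt (gbrC c) y x k).eval₂ Polynomial.C (-(X : P2) - C X)
        = sk (brkt (gbrC c) y x k) := rfl
    rw [hrw]
    fin_cases k <;>
    · simp only [Fin.zero_eta, Fin.mk_one, Fin.reduceFinMk, brkt, gbrC, Fin.sum_univ_three,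
        map_add, map_mul, sk_neg, sk_sub, sk_aeval, sk_X, sk_C, Matrix.cons_val_zero,
        Matrix.cons_val_one, Matrix.head_cons, Matrix.cons_val_two, Matrix.tail_cons,
        mul_zero, zero_mul, add_zero, zero_add, map_zero, neg_zero, map_ofNat]
      apply extP2
      intro u v
      simp only [map_add, map_mul, e2_neg, e2_sub, map_zero, map_ofNat, e2_aeval, e2_C,
        e2_X, e2_algebraMap, eval_X, eval_C, mul_zero, zero_mul, add_zero, zero_add,
        neg_zero, eval_ofNat]
      ring_nf
  · simp only [sub2_sb]
    rw [collapse₂ (gbrC c) x (brkt (gbrC c) y z) k (C X) X,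
        collapse₁ (gbrC c) (brkt (gbrC c) x y) z k (C X + X) (C X),
        collapse₂ (gbrC c) y (brkt (gbrC c) x z) k X (C X)]
    simp only [subst_brkt]
    fin_cases k <;>
    · simp only [Fin.zero_eta, Fin.mk_one, Fin.reduceFinMk, gbrC, Fin.sum_univ_three,
        Matrix.cons_val_zero, Matrix.cons_val_one, Matrix.head_cons, Matrix.cons_val_two,
        Matrix.tail_cons]
      simp only [map_add, map_mul, map_zero, map_ofNat, sb_neg, sb_sub, subst_neg,
        subst_sub, subst_C, subst_X, sb_C, sb_X, aeval_X, aeval_C, mul_zero, zero_mul,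
        add_zero, zero_add, neg_zero]
      apply extP3
      intro u v w
      simp only [map_add, map_mul, map_zero, map_ofNat, e3_neg, e3_sub, e3_aeval, e3_C2,
        e3_CX, e3_X, e3_algebraMap, eval_X, eval_C, eval_ofNat, mul_zero, zero_mul,
        add_zero, zero_add, neg_zero]
      ring_nf
end
end

section
/- Let α₁, α₂, β₁, β₂, b ∈ ℂ and set S(x,y) = x + y + b. Then the identity S(μ, −λ−μ−∂)(∂+λ+2μ)(∂+β₁λ+β₂) = ((α₁−1)λ−μ+α₂)(∂+2λ+2μ)·S(λ+μ, −λ−μ−∂) + (∂+α₁λ+μ+α₂)(∂+2μ)·S(μ, −μ−∂) holds in the polynomial ring ℂ[∂,λ,μ] if and only if β₁ = 0, β₂ = 2α₂, α₁ = 3/2 and b = −2α₂. -/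
/-!
Statement 3: with S(x,y) = x + y + b, the identity
S(μ,−λ−μ−∂)(∂+λ+2μ)(∂+β₁λ+β₂)
  = ((α₁−1)λ−μ+α₂)(∂+2λ+2μ)·S(λ+μ,−λ−μ−∂) + (∂+α₁λ+μ+α₂)(∂+2μ)·S(μ,−μ−∂)
holds in ℂ[∂,λ,μ] iff β₁ = 0, β₂ = 2α₂, α₁ = 3/2 and b = −2α₂.
Variables: ∂ = X 0, λ = X 1, μ = X 2 in `MvPolynomial (Fin 3) ℂ`.
-/

open MvPolynomial

/-- The symmetric polynomial S(x,y) = x + y + b, evaluated in ℂ[∂,λ,μ]. -/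
noncomputable def Spoly (b : ℂ) (x y : MvPolynomial (Fin 3) ℂ) : MvPolynomial (Fin 3) ℂ :=
  x + y + C b

theorem jacobi_LYY_deg_one_identity_iff (α₁ α₂ β₁ β₂ b : ℂ) :
    ((Spoly b (X 2) (-X 1 - X 2 - X 0) * ((X 0 + X 1 + 2 * X 2) * (X 0 + C β₁ * X 1 + C β₂))
        : MvPolynomial (Fin 3) ℂ)
      = (C (α₁ - 1) * X 1 - X 2 + C α₂) * (X 0 + 2 * X 1 + 2 * X 2)
          * Spoly b (X 1 + X 2) (-X 1 - X 2 - X 0)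
        + (X 0 + C α₁ * X 1 + X 2 + C α₂) * (X 0 + 2 * X 2)
          * Spoly b (X 2) (-X 2 - X 0))
      ↔ (β₁ = 0 ∧ β₂ = 2 * α₂ ∧ α₁ = 3 / 2 ∧ b = -2 * α₂) := by
  constructor
  · intro h
    have e01 := congrArg (eval ![(0:ℂ), 1, 0]) h
    have e02 := congrArg (eval ![(0:ℂ), 2, 0]) h
    have e03 := congrArg (eval ![(0:ℂ), 3, 0]) h
    have e10 := congrArg (eval ![(1:ℂ), 0, 0]) h
    have e11 := congrArg (eval ![(1:ℂ), 1, 0]) h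
    have e12 := congrArg (eval ![(1:ℂ), 2, 0]) h
    have e13 := congrArg (eval ![(1:ℂ), 3, 0]) h
    have e20 := congrArg (eval ![(2:ℂ), 0, 0]) h
    have e21 := congrArg (eval ![(2:ℂ), 1, 0]) h
    have e22 := congrArg (eval ![(2:ℂ), 2, 0]) h
    have e23 := congrArg (eval ![(2:ℂ), 3, 0]) h
    simp [Spoly] at e01 e02 e03 e10 e11 e12 e13 e20 e21 e22 e23
    refine ⟨?_, ?_, ?_, ?_⟩
    · linear_combination (-1/2 : ℂ) * e01 + (1/2 : ℂ) * e02 + (-1/6 : ℂ) * e03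
    · linear_combination (1 : ℂ) * e10 + (-1/2 : ℂ) * e20
    · linear_combination (1/2 : ℂ) * e01 + (-1/8 : ℂ) * e02 + (11/12 : ℂ) * e10 + (-3/2 : ℂ) * e11 + (3/4 : ℂ) * e12 + (-1/6 : ℂ) * e13 + (-11/24 : ℂ) * e20 + (3/4 : ℂ) * e21 + (-3/8 : ℂ) * e22 + (1/12 : ℂ) * e23
    · linear_combination (9/2 : ℂ) * e01 + (-3/2 : ℂ) * b * e01 + (-9/4 : ℂ) * e02 + (3/4 : ℂ) * b * e02 + (1/2 : ℂ) * e03 + (-1/6 : ℂ) * b * e03 + (5/3 : ℂ) * e10 + (-11/6 : ℂ) * b * e10 + (-6 : ℂ) * e11 + (3 : ℂ) * b * e11 + (3 : ℂ) * e12 + (-3/2 : ℂ) * b * e12 + (-2/3 : ℂ) * e13 + (1/3 : ℂ) * b * e13 + (1/12 : ℂ) * e20 + (11/12 : ℂ) * b * e20 + (3/2 : ℂ) * e21 + (-3/2 : ℂ) * b * e21 + (-3/4 : ℂ) * e22 + (3/4 : ℂ) * b * e22 + (1/6 : ℂ) * e23 + (-1/6 : ℂ) * b * e23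
  · rintro ⟨h1, h2, h3, h4⟩
    subst h1 h2 h3 h4
    apply MvPolynomial.funext
    intro x
    simp only [Spoly, map_add, map_mul, map_sub, map_neg, map_ofNat, eval_X, eval_C]
    ring
end

section
/- Let a, b ∈ ℂ with a ≠ 3/2. Then every conformal derivation of TSV(a,b) is inner: for every conformal derivation d of TSV(a,b) there exists x ∈ TSV(a,b) such that d_λ(y) = [x_λ y] for all y ∈ TSV(a,b). -/
noncomputable section
open Polynomial

/-- A conformal linear map d : R → R[λ]: a ℂ-linear map with d_λ(∂u) = (∂+λ)d_λ(u). -/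
def ConfLinear (d : R3 → Fin 3 → P2) : Prop :=
  (∀ x y : R3, d (x + y) = d x + d y) ∧
  (∀ (k : ℂ) (x : R3), d (k • x) = k • d x) ∧
  (∀ (x : R3) (k : Fin 3), d ((X : Polynomial ℂ) • x) k = (C X + X) * d x k)

/-- A conformal derivation of the Lie conformal algebra with bracket `brkt g`:
a conformal linear map d with d_λ[x_μ y] = [(d_λ x)_{λ+μ} y] + [x_μ (d_λ y)],
an identity in R[λ,μ] (λ the middle and μ the outer variable of `P3`). -/
def IsConfDer (g : Fin 3 → Fin 3 → Fin 3 → P2) (d : R3 → Fin 3 → P2) : Prop :=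
  ConfLinear d ∧
  ∀ (x y : R3) (k : Fin 3),
    (∑ n ∈ msupp (brkt g x y), (X : P3) ^ n * sub2 (C X) (d (mcoeff (brkt g x y) n) k))
      = (∑ m ∈ msupp (d x),
          (C (X : P2) : P3) ^ m * sub2 (C X + X) (brkt g (mcoeff (d x) m) y k))
        + ∑ m ∈ msupp (d y),
            (C (X : P2) : P3) ^ m * sub2 X (brkt g x (mcoeff (d y) m) k)

namespace TSVaux

/-- strip the inner variable (set ∂ = 0) -/
def strip : P2 →+* Polynomial ℂ := mapRingHom (evalRingHom 0)
/-- embed `ℂ[λ]` into `P2` as inner-constant polynomials -/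
def rho : Polynomial ℂ →+* P2 := mapRingHom C
/-- evaluate the inner variable at `c` -/
def tc (c : ℂ) : P2 →+* P2 := mapRingHom ((C : ℂ →+* Polynomial ℂ).comp (evalRingHom c))
/-- σ p = p(∂ ↦ -λ, ν ↦ λ) -/
def sg (p : P2) : P2 := eval₂ (aeval (-(X : P2)) : Polynomial ℂ →ₐ[ℂ] P2).toRingHom X p

lemma strip_rho (q : Polynomial ℂ) : strip (rho q) = q := by
  simp only [strip, rho, coe_mapRingHom, map_map]
  convert Polynomial.map_id using 2
  ext r : 1
  simp

lemma tc0_eq (p : P2) : tc 0 p = rho (strip p) := by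
  simp [tc, rho, strip, coe_mapRingHom, map_map]

lemma tc_X (c : ℂ) : tc c (X : P2) = X := by simp [tc, coe_mapRingHom]

lemma tc_CC (c r : ℂ) : tc c (C (C r) : P2) = C (C r) := by
  simp [tc, coe_mapRingHom]

lemma tc_CX (c : ℂ) : tc c (C (X : Polynomial ℂ) : P2) = C (C c) := by
  simp [tc, coe_mapRingHom]

lemma tc_sg (c : ℂ) (p : P2) : tc c (sg p) = sg p := by
  have h : (tc c).comp ((aeval (-(X : P2)) : Polynomial ℂ →ₐ[ℂ] P2).toRingHom)
      = (aeval (-(X : P2)) : Polynomial ℂ →ₐ[ℂ] P2).toRingHom := by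
    apply Polynomial.ringHom_ext
    · intro r
      simp [tc, coe_mapRingHom]
    · simp [tc, coe_mapRingHom]
  induction p using Polynomial.induction_on' with
  | add p q hp hq =>
      simp only [sg] at hp hq ⊢
      rw [eval₂_add, map_add, hp, hq]
  | monomial n q =>
      simp only [sg, eval₂_monomial, map_mul, map_pow, tc_X]
      rw [← RingHom.comp_apply, h]

end TSVaux
namespace TSVaux
lemma tc_mul (c : ℂ) (p q : P2) : tc c (p * q) = tc c p * tc c q := map_mul _ _ _
lemma tc_add (c : ℂ) (p q : P2) : tc c (p + q) = tc c p + tc c q := map_add _ _ _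
lemma tc_sub (c : ℂ) (p q : P2) : tc c (p - q) = tc c p - tc c q := map_sub _ _ _
lemma tc_two (c : ℂ) : tc c 2 = 2 := map_ofNat _ 2
end TSVaux

namespace TSVaux2

lemma amap (r : ℂ) : algebraMap ℂ P2 r = C (C r) := by
  simp [Polynomial.algebraMap_apply]

lemma confLinear_smul_poly {d : R3 → Fin 3 → P2} (h : ConfLinear d)
    (p : Polynomial ℂ) (z : R3) (k : Fin 3) :
    d (fun j => p * z j) k = aeval (C X + X : P2) p * d z k := by
  induction p using Polynomial.induction_on with
  | C r =>
      have hz : (fun j => C r * z j) = r • z := by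
        funext j
        simp [Polynomial.smul_eq_C_mul]
      rw [hz, h.2.1]
      simp [Pi.smul_apply, Algebra.smul_def, amap]
  | add p q hp hq =>
      have hz : (fun j => (p + q) * z j) = (fun j => p * z j) + (fun j => q * z j) := by
        funext j; simp [add_mul]
      rw [hz, h.1, Pi.add_apply, hp, hq, map_add, add_mul]
  | monomial n r ih =>
      have hz : (fun j => (C r * X ^ (n+1)) * z j)
          = (X : Polynomial ℂ) • ((fun j => (C r * X ^ n) * z j) : R3) := by
        funext j
        simp only [Pi.smul_apply, smul_eq_mul]
        ring
      rw [hz, h.2.2, ih, map_mul, map_mul, map_pow, map_pow, aeval_X]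
      ring

lemma d_apply {d : R3 → Fin 3 → P2} (h : ConfLinear d) (z : R3) (k : Fin 3) :
    d z k = aeval (C X + X : P2) (z 0) * d eL k + aeval (C X + X : P2) (z 1) * d eY k
      + aeval (C X + X : P2) (z 2) * d eM k := by
  have hz : z = (fun j => z 0 * eL j) + ((fun j => z 1 * eY j) + fun j => z 2 * eM j) := by
    funext j
    fin_cases j <;> simp [eL, eY, eM]
  calc d z k = d ((fun j => z 0 * eL j) + ((fun j => z 1 * eY j) + fun j => z 2 * eM j)) k := by
        rw [← hz]
  _ = _ := by
        rw [h.1, h.1, Pi.add_apply, Pi.add_apply, confLinear_smul_poly h,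
          confLinear_smul_poly h, confLinear_smul_poly h, add_assoc]

end TSVaux2

namespace TSVaux3

lemma brkt_left_dec (g : Fin 3 → Fin 3 → Fin 3 → P2) (z y : R3) (k : Fin 3) :
    brkt g z y k = aeval (-(X : P2)) (z 0) * brkt g eL y k
      + aeval (-(X : P2)) (z 1) * brkt g eY y k
      + aeval (-(X : P2)) (z 2) * brkt g eM y k := by
  simp only [brkt, eL, eY, eM, Fin.sum_univ_three, Matrix.cons_val_zero, Matrix.cons_val_one,
    Matrix.head_cons, Matrix.cons_val_two, Matrix.tail_cons, map_one, map_zero]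
  ring

lemma brkt_right_dec (g : Fin 3 → Fin 3 → Fin 3 → P2) (x z : R3) (k : Fin 3) :
    brkt g x z k = aeval ((X : P2) + C X) (z 0) * brkt g x eL k
      + aeval ((X : P2) + C X) (z 1) * brkt g x eY k
      + aeval ((X : P2) + C X) (z 2) * brkt g x eM k := by
  simp only [brkt, eL, eY, eM, Fin.sum_univ_three, Matrix.cons_val_zero, Matrix.cons_val_one,
    Matrix.head_cons, Matrix.cons_val_two, Matrix.tail_cons, map_one, map_zero]
  ring

lemma brkt_ee (g : Fin 3 → Fin 3 → Fin 3 → P2) (i j k : Fin 3) :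
    brkt g (![eL, eY, eM] i) (![eL, eY, eM] j) k = g i j k := by
  fin_cases i <;> fin_cases j <;>
    simp [brkt, eL, eY, eM, Fin.sum_univ_three]

lemma b00 (g : Fin 3 → Fin 3 → Fin 3 → P2) (k) : brkt g eL eL k = g 0 0 k := brkt_ee g 0 0 k
lemma b01 (g : Fin 3 → Fin 3 → Fin 3 → P2) (k) : brkt g eL eY k = g 0 1 k := brkt_ee g 0 1 k
lemma b02 (g : Fin 3 → Fin 3 → Fin 3 → P2) (k) : brkt g eL eM k = g 0 2 k := brkt_ee g 0 2 k
lemma b10 (g : Fin 3 → Fin 3 → Fin 3 → P2) (k) : brkt g eY eL k = g 1 0 k := brkt_ee g 1 0 k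
lemma b11 (g : Fin 3 → Fin 3 → Fin 3 → P2) (k) : brkt g eY eY k = g 1 1 k := brkt_ee g 1 1 k
lemma b12 (g : Fin 3 → Fin 3 → Fin 3 → P2) (k) : brkt g eY eM k = g 1 2 k := brkt_ee g 1 2 k
lemma b20 (g : Fin 3 → Fin 3 → Fin 3 → P2) (k) : brkt g eM eL k = g 2 0 k := brkt_ee g 2 0 k
lemma b21 (g : Fin 3 → Fin 3 → Fin 3 → P2) (k) : brkt g eM eY k = g 2 1 k := brkt_ee g 2 1 k
lemma b22 (g : Fin 3 → Fin 3 → Fin 3 → P2) (k) : brkt g eM eM k = g 2 2 k := brkt_ee g 2 2 k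

end TSVaux3

namespace TSVaux4

lemma key (B : Polynomial ℂ →+* P2) (β : P2) (p : P2) (M : Finset ℕ) (hM : p.support ⊆ M) :
    ∑ n ∈ M, β ^ n * B (p.coeff n) = eval₂ B β p := by
  rw [eval₂_eq_sum, Polynomial.sum_def]
  rw [← Finset.sum_subset hM]
  · exact Finset.sum_congr rfl fun n _ => mul_comm _ _
  · intro n _ hn
    simp [Polynomial.notMem_support_iff.mp hn]

lemma support_subset_msupp (v : Fin 3 → P2) (i : Fin 3) : (v i).support ⊆ msupp v :=
  fun n hn => Finset.mem_biUnion.mpr ⟨i, Finset.mem_univ i, hn⟩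

lemma ev_sub2_CX (p : P2) : evalRingHom (0 : P2) (sub2 (C X) p) = p := by
  unfold sub2
  rw [Polynomial.hom_eval₂]
  have h : (evalRingHom (0 : P2)).comp (Polynomial.C.comp Polynomial.C)
      = (Polynomial.C : Polynomial ℂ →+* P2) := by
    apply Polynomial.ringHom_ext <;> simp
  rw [h]
  simp [eval₂_C_X]

lemma ev_sub2_CXX (p : P2) : evalRingHom (0 : P2) (sub2 (C X + X) p) = p := by
  unfold sub2
  rw [Polynomial.hom_eval₂]
  have h : (evalRingHom (0 : P2)).comp (Polynomial.C.comp Polynomial.C)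
      = (Polynomial.C : Polynomial ℂ →+* P2) := by
    apply Polynomial.ringHom_ext <;> simp
  rw [h]
  simp [eval₂_C_X]

lemma ev_sub2_X (p : P2) : evalRingHom (0 : P2) (sub2 X p) = C (p.coeff 0) := by
  unfold sub2
  rw [Polynomial.hom_eval₂]
  have h : (evalRingHom (0 : P2)).comp (Polynomial.C.comp Polynomial.C)
      = (Polynomial.C : Polynomial ℂ →+* P2) := by
    apply Polynomial.ringHom_ext <;> simp
  rw [h]
  simp [eval₂_at_zero]

lemma eps_sum (s : P3) (T : P2 →+* P2) (hT : ∀ p, evalRingHom (0 : P2) (sub2 s p) = T p)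
    (A : Polynomial ℂ →ₐ[ℂ] P2) (c0 c1 c2 : P2) (Φ : R3 → P2)
    (hΦ : ∀ z : R3, Φ z = A (z 0) * c0 + A (z 1) * c1 + A (z 2) * c2)
    (β : P3) (v : Fin 3 → P2) :
    evalRingHom (0 : P2) (∑ n ∈ msupp v, β ^ n * sub2 s (Φ (mcoeff v n)))
    = eval₂ (T.comp A.toRingHom) (evalRingHom (0 : P2) β) (v 0) * T c0
      + eval₂ (T.comp A.toRingHom) (evalRingHom (0 : P2) β) (v 1) * T c1
      + eval₂ (T.comp A.toRingHom) (evalRingHom (0 : P2) β) (v 2) * T c2 := by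
  set ε := evalRingHom (0 : P2)
  set b := ε β with hb
  rw [map_sum]
  have h1 : ∀ n, ε (β ^ n * sub2 s (Φ (mcoeff v n)))
      = b ^ n * ((T.comp A.toRingHom) ((v 0).coeff n) * T c0)
        + (b ^ n * ((T.comp A.toRingHom) ((v 1).coeff n) * T c1)
        + b ^ n * ((T.comp A.toRingHom) ((v 2).coeff n) * T c2)) := by
    intro n
    rw [map_mul, map_pow, hT, hΦ]
    have hm : ∀ i, mcoeff v n i = (v i).coeff n := fun _ => rfl
    rw [map_add, map_add, map_mul, map_mul, map_mul, hm 0, hm 1, hm 2]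
    simp only [RingHom.comp_apply, AlgHom.toRingHom_eq_coe, RingHom.coe_coe]
    ring
  have h2 : ∀ (i : Fin 3) (c : P2),
      (∑ n ∈ msupp v, b ^ n * ((T.comp A.toRingHom) ((v i).coeff n) * T c))
      = eval₂ (T.comp A.toRingHom) b (v i) * T c := by
    intro i c
    rw [← key (T.comp A.toRingHom) b (v i) (msupp v) (support_subset_msupp v i), Finset.sum_mul]
    exact Finset.sum_congr rfl fun n _ => (mul_assoc _ _ _).symm
  rw [Finset.sum_congr rfl fun n _ => h1 n, Finset.sum_add_distrib, Finset.sum_add_distrib,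
    h2 0 c0, h2 1 c1, h2 2 c2, add_assoc]

end TSVaux4

namespace TSVaux5
open TSVaux TSVaux2 TSVaux3 TSVaux4

lemma epsL {d : R3 → Fin 3 → P2} (hcl : ConfLinear d) (v : Fin 3 → P2) (k : Fin 3) :
    evalRingHom (0 : P2) (∑ n ∈ msupp v, (X : P3) ^ n * sub2 (C X) (d (mcoeff v n) k))
    = aeval (C X + X : P2) ((v 0).coeff 0) * d eL k
      + aeval (C X + X : P2) ((v 1).coeff 0) * d eY k
      + aeval (C X + X : P2) ((v 2).coeff 0) * d eM k := by
  have h := eps_sum (C X) (RingHom.id P2) ev_sub2_CX (aeval (C X + X : P2))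
      (d eL k) (d eY k) (d eM k) (fun z => d z k) (fun z => d_apply hcl z k) X v
  beta_reduce at h
  rw [h]
  have hβ : evalRingHom (0 : P2) (X : P3) = 0 := by simp
  rw [hβ, eval₂_at_zero, eval₂_at_zero, eval₂_at_zero]
  simp

lemma epsR1 (g : Fin 3 → Fin 3 → Fin 3 → P2) (y : R3) (v : Fin 3 → P2) (k : Fin 3) :
    evalRingHom (0 : P2) (∑ m ∈ msupp v, (C (X : P2) : P3) ^ m
        * sub2 (C X + X) (brkt g (mcoeff v m) y k))
    = sg (v 0) * brkt g eL y k + sg (v 1) * brkt g eY y k + sg (v 2) * brkt g eM y k := by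
  have h := eps_sum (C X + X) (RingHom.id P2) ev_sub2_CXX (aeval (-(X : P2)))
      (brkt g eL y k) (brkt g eY y k) (brkt g eM y k)
      (fun z => brkt g z y k) (fun z => brkt_left_dec g z y k) (C X) v
  beta_reduce at h
  rw [h]
  have hβ : evalRingHom (0 : P2) (C (X : P2) : P3) = X := by simp
  rw [hβ]
  simp only [sg, RingHom.id_comp, RingHom.id_apply]

lemma epsR2 (g : Fin 3 → Fin 3 → Fin 3 → P2) (x : R3) (v : Fin 3 → P2) (k : Fin 3) :
    evalRingHom (0 : P2) (∑ m ∈ msupp v, (C (X : P2) : P3) ^ m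
        * sub2 X (brkt g x (mcoeff v m) k))
    = v 0 * C ((brkt g x eL k).coeff 0) + v 1 * C ((brkt g x eY k).coeff 0)
      + v 2 * C ((brkt g x eM k).coeff 0) := by
  have hT : ∀ p : P2, evalRingHom (0 : P2) (sub2 X p)
      = ((C : Polynomial ℂ →+* P2).comp (evalRingHom (0 : Polynomial ℂ))) p := by
    intro p
    rw [ev_sub2_X]
    simp [Polynomial.coeff_zero_eq_eval_zero]
  have h := eps_sum X ((C : Polynomial ℂ →+* P2).comp (evalRingHom (0 : Polynomial ℂ))) hT
      (aeval ((X : P2) + C X))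
      (brkt g x eL k) (brkt g x eY k) (brkt g x eM k)
      (fun z => brkt g x z k) (fun z => brkt_right_dec g x z k) (C X) v
  beta_reduce at h
  rw [h]
  have hβ : evalRingHom (0 : P2) (C (X : P2) : P3) = X := by simp
  have hcomp : ((C : Polynomial ℂ →+* P2).comp (evalRingHom (0 : Polynomial ℂ))).comp
      (aeval ((X : P2) + C X)).toRingHom = (C : Polynomial ℂ →+* P2) := by
    apply Polynomial.ringHom_ext <;> simp
  rw [hβ, hcomp, eval₂_C_X, eval₂_C_X, eval₂_C_X]
  simp [Polynomial.coeff_zero_eq_eval_zero]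

end TSVaux5

namespace TSVaux6
open TSVaux TSVaux2 TSVaux3 TSVaux4 TSVaux5

lemma extract (g : Fin 3 → Fin 3 → Fin 3 → P2) {d : R3 → Fin 3 → P2}
    (hd : IsConfDer g d) (x y : R3) (k : Fin 3) :
    aeval (C X + X : P2) ((brkt g x y 0).coeff 0) * d eL k
      + aeval (C X + X : P2) ((brkt g x y 1).coeff 0) * d eY k
      + aeval (C X + X : P2) ((brkt g x y 2).coeff 0) * d eM k
    = (sg (d x 0) * brkt g eL y k + sg (d x 1) * brkt g eY y k + sg (d x 2) * brkt g eM y k)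
      + (d y 0 * C ((brkt g x eL k).coeff 0) + d y 1 * C ((brkt g x eY k).coeff 0)
         + d y 2 * C ((brkt g x eM k).coeff 0)) := by
  have h := congrArg (evalRingHom (0 : P2)) (hd.2 x y k)
  rw [map_add, epsL hd.1, epsR1, epsR2] at h
  exact h

end TSVaux6

namespace TSVaux8
open TSVaux TSVaux2 TSVaux3

lemma tc_CCX (c r : ℂ) : tc c (C (C r * X) : P2) = C (C (r * c)) := by
  simp [tc, coe_mapRingHom]

lemma X_add_CC_ne (q : Polynomial ℂ) : (X + C q : P2) ≠ 0 := by
  intro h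
  have := congrArg (fun p : P2 => p.coeff 1) h
  simp [Polynomial.coeff_C] at this

lemma X_sub_CC_ne (q : Polynomial ℂ) : (X - C q : P2) ≠ 0 := by
  intro h
  have := congrArg (fun p : P2 => p.coeff 1) h
  simp [Polynomial.coeff_C] at this

lemma CXX_ne : (C X + X : P2) ≠ 0 := by
  intro h
  have := congrArg (fun p : P2 => p.coeff 1) h
  simp [Polynomial.coeff_C] at this

lemma aeval_neg_neg (q : Polynomial ℂ) :
    aeval (-(X : P2)) (aeval (-(X : Polynomial ℂ)) q) = rho q := by
  have h : ((aeval (-(X : P2)) : Polynomial ℂ →ₐ[ℂ] P2).toRingHom).comp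
      ((aeval (-(X : Polynomial ℂ)) : Polynomial ℂ →ₐ[ℂ] Polynomial ℂ).toRingHom) = rho := by
    apply Polynomial.ringHom_ext
    · intro r
      simp [rho, coe_mapRingHom, amap]
    · simp [rho, coe_mapRingHom]
  have h2 := RingHom.congr_fun h q
  simpa using h2

end TSVaux8


open TSVaux TSVaux2 TSVaux3 TSVaux4 TSVaux5 TSVaux6 TSVaux8

/-- For a ≠ 3/2, every conformal derivation of TSV(a,b) is inner,
i.e. of the form (ad x)_λ y = [x_λ y] for some x ∈ TSV(a,b). -/
theorem TSVab_conformal_derivations_inner (a b : ℂ) (ha : a ≠ 3 / 2)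
    (d : R3 → Fin 3 → P2) (hd : IsConfDer (gbrAB a b) d) :
    ∃ x : R3, ∀ y : R3, d y = brkt (gbrAB a b) x y := by
  have hb2 : (C (C (2 * b)) : P2) = 2 * C (C b) := by
    rw [show (2 : ℂ) * b = b + b by ring, map_add, map_add]
    ring
  have h110 := extract (gbrAB a b) hd eY eY 0
  have h010 := extract (gbrAB a b) hd eL eY 0
  have h021 := extract (gbrAB a b) hd eL eM 1
  have h022 := extract (gbrAB a b) hd eL eM 2
  have h000 := extract (gbrAB a b) hd eL eL 0
  have h011 := extract (gbrAB a b) hd eL eY 1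
  have h012 := extract (gbrAB a b) hd eL eY 2
  have h001 := extract (gbrAB a b) hd eL eL 1
  have h002 := extract (gbrAB a b) hd eL eL 2
  simp only [b00, b01, b02, b10, b11, b12, b20, b21, b22, gbrAB, Matrix.cons_val_zero,
    Matrix.cons_val_one, Matrix.head_cons, Matrix.cons_val_two, Matrix.tail_cons,
    Polynomial.coeff_add, Polynomial.mul_coeff_zero, Polynomial.coeff_X_zero,
    Polynomial.coeff_C_zero, Polynomial.coeff_zero, Polynomial.coeff_sub, map_add, map_sub,
    Polynomial.aeval_X, Polynomial.aeval_C, amap, mul_zero, zero_mul, add_zero, zero_add,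
    map_zero] at h110 h010 h021 h022 h000 h011 h012 h001 h002
  -- canonical forms
  have E110 : (C X + X : P2) * d eM 0 = 0 := by linear_combination h110
  have E010 : (X + C (C b) : P2) * d eY 0 = 0 := by linear_combination h010
  have E021 : (X + C (C b) : P2) * d eM 1 = 0 := by linear_combination h021 - d eM 1 * hb2
  have E022 : (X : P2) * d eM 2
      = sg (d eL 0) * (C X + C (C (2 * (a - 1))) * X + C (C (2 * b))) := by
    linear_combination h022
  have E000 : (X : P2) * d eL 0 = sg (d eL 0) * (C X + 2 * X) := by linear_combination h000
  have E011 : (X : P2) * d eY 1 = sg (d eL 0) * (C X + C (C a) * X + C (C b)) := by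
    linear_combination h011
  have E012 : (X - C (C b) : P2) * d eY 2 = sg (d eL 1) * (C X + 2 * X) := by
    linear_combination h012 + d eY 2 * hb2
  rw [show (C a - C 1 : Polynomial ℂ) = C (a - 1) from (map_sub C a 1).symm] at h001
  rw [show (C (2 * a) - C 3 : Polynomial ℂ) = C (2 * a - 3) from (map_sub C (2 * a) 3).symm]
    at h002
  have E001 : (X - C (C b) : P2) * d eL 1
      = sg (d eL 1) * (C (C (a - 1) * X) + C (C a) * X - C (C b)) := by
    linear_combination h001
  have E002 : (X - C (C (2 * b)) : P2) * d eL 2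
      = sg (d eL 2) * (C (C (2 * a - 3) * X) + C (C (2 * (a - 1))) * X - C (C (2 * b))) := by
    linear_combination h002
  -- the P-chain (Virasoro part)
  have t0 := congrArg (tc 0) E000
  have t1 := congrArg (tc 1) E000
  simp only [tc_mul, tc_add, tc_sub, tc_two, tc_X, tc_CX, tc_CC, tc_CCX, tc_sg,
    Polynomial.C_0, Polynomial.C_1, mul_zero, zero_mul, add_zero, zero_add, mul_one] at t0 t1
  have hsg0 : (X : P2) * (tc 1 (d eL 0) - tc 0 (d eL 0)) = sg (d eL 0) := by
    linear_combination t1 - t0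
  have hfix0 : tc 0 (tc 1 (d eL 0) - tc 0 (d eL 0)) = tc 1 (d eL 0) - tc 0 (d eL 0) := by
    have h2 := congrArg (tc 0) hsg0
    rw [map_mul, tc_X, tc_sg] at h2
    exact mul_left_cancel₀ Polynomial.X_ne_zero (h2.trans hsg0.symm)
  set P : Polynomial ℂ := strip (tc 1 (d eL 0) - tc 0 (d eL 0)) with hPdef
  have hP : rho P = tc 1 (d eL 0) - tc 0 (d eL 0) := by rw [hPdef, ← tc0_eq, hfix0]
  have hsgF0 : sg (d eL 0) = X * rho P := by rw [hP]; exact hsg0.symm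
  have hF0 : d eL 0 = rho P * (C X + 2 * X) := by
    apply mul_left_cancel₀ (Polynomial.X_ne_zero : (X : P2) ≠ 0)
    rw [E000, hsgF0]; ring
  -- the Q-chain
  have u0 := congrArg (tc 0) E012
  have u1 := congrArg (tc 1) E012
  simp only [tc_mul, tc_add, tc_sub, tc_two, tc_X, tc_CX, tc_CC, tc_CCX, tc_sg,
    Polynomial.C_0, Polynomial.C_1, mul_zero, zero_mul, add_zero, zero_add, mul_one] at u0 u1
  have hsg1 : (X - C (C b) : P2) * (tc 1 (d eY 2) - tc 0 (d eY 2)) = sg (d eL 1) := by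
    linear_combination u1 - u0
  have hfix1 : tc 0 (tc 1 (d eY 2) - tc 0 (d eY 2)) = tc 1 (d eY 2) - tc 0 (d eY 2) := by
    have h2 := congrArg (tc 0) hsg1
    rw [map_mul, map_sub, tc_X, tc_CC, tc_sg] at h2
    exact mul_left_cancel₀ (X_sub_CC_ne (C b)) (h2.trans hsg1.symm)
  set Q : Polynomial ℂ := strip (tc 1 (d eY 2) - tc 0 (d eY 2)) with hQdef
  have hQ : rho Q = tc 1 (d eY 2) - tc 0 (d eY 2) := by rw [hQdef, ← tc0_eq, hfix1]
  have hsgF1 : sg (d eL 1) = (X - C (C b)) * rho Q := by rw [hQ]; exact hsg1.symm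
  have hG2 : d eY 2 = rho Q * (C X + 2 * X) := by
    apply mul_left_cancel₀ (X_sub_CC_ne (C b))
    rw [E012, hsgF1]; ring
  have hF1 : d eL 1 = rho Q * (C (C (a - 1) * X) + C (C a) * X - C (C b)) := by
    apply mul_left_cancel₀ (X_sub_CC_ne (C b))
    rw [E001, hsgF1]; ring
  -- the R-chain
  have v0 := congrArg (tc 0) E002
  have v1 := congrArg (tc 1) E002
  simp only [tc_mul, tc_add, tc_sub, tc_two, tc_X, tc_CX, tc_CC, tc_CCX, tc_sg,
    Polynomial.C_0, Polynomial.C_1, mul_zero, zero_mul, add_zero, zero_add, mul_one] at v0 v1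
  have hW3 : (X - C (C (2 * b)) : P2) * (tc 1 (d eL 2) - tc 0 (d eL 2))
      = sg (d eL 2) * C (C (2 * a - 3)) := by
    linear_combination v1 - v0
  have hka : (2 * a - 3 : ℂ) ≠ 0 := by
    intro h
    exact ha (by linear_combination h / 2)
  have hinv : (C (C ((2 * a - 3)⁻¹)) : P2) * C (C (2 * a - 3)) = 1 := by
    rw [← map_mul, ← map_mul, inv_mul_cancel₀ hka, map_one, map_one]
  set W4 : P2 := C (C ((2 * a - 3)⁻¹)) * (tc 1 (d eL 2) - tc 0 (d eL 2)) with hW4def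
  have hsg2 : (X - C (C (2 * b)) : P2) * W4 = sg (d eL 2) := by
    have : (X - C (C (2 * b)) : P2) * W4
        = sg (d eL 2) * (C (C ((2 * a - 3)⁻¹)) * C (C (2 * a - 3))) := by
      rw [hW4def]
      linear_combination C (C ((2 * a - 3)⁻¹) : Polynomial ℂ) * hW3
    rw [hinv, mul_one] at this
    exact this
  have hfix2 : tc 0 W4 = W4 := by
    have h2 := congrArg (tc 0) hsg2
    rw [map_mul, map_sub, tc_X, tc_CC, tc_sg] at h2
    exact mul_left_cancel₀ (X_sub_CC_ne (C (2 * b))) (h2.trans hsg2.symm)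
  set R : Polynomial ℂ := strip W4 with hRdef
  have hR : rho R = W4 := by rw [hRdef, ← tc0_eq, hfix2]
  have hsgF2 : sg (d eL 2) = (X - C (C (2 * b))) * rho R := by rw [hR]; exact hsg2.symm
  have hF2 : d eL 2 = rho R * (C (C (2 * a - 3) * X) + C (C (2 * (a - 1))) * X
      - C (C (2 * b))) := by
    apply mul_left_cancel₀ (X_sub_CC_ne (C (2 * b)))
    rw [E002, hsgF2]; ring
  -- remaining components
  have hG1 : d eY 1 = rho P * (C X + C (C a) * X + C (C b)) := by
    apply mul_left_cancel₀ (Polynomial.X_ne_zero : (X : P2) ≠ 0)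
    rw [E011, hsgF0]; ring
  have hH2 : d eM 2 = rho P * (C X + C (C (2 * (a - 1))) * X + C (C (2 * b))) := by
    apply mul_left_cancel₀ (Polynomial.X_ne_zero : (X : P2) ≠ 0)
    rw [E022, hsgF0]; ring
  have hY0 : d eY 0 = 0 := (mul_eq_zero.mp E010).resolve_left (X_add_CC_ne (C b))
  have hM0 : d eM 0 = 0 := (mul_eq_zero.mp E110).resolve_left CXX_ne
  have hM1 : d eM 1 = 0 := (mul_eq_zero.mp E021).resolve_left (X_add_CC_ne (C b))
  -- reconstruction
  set xx : R3 := ![aeval (-(X : Polynomial ℂ)) P, aeval (-(X : Polynomial ℂ)) Q,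
      aeval (-(X : Polynomial ℂ)) R] with hxx
  have hx0 : aeval (-(X : P2)) (xx 0) = rho P := by
    rw [hxx]; exact aeval_neg_neg P
  have hx1 : aeval (-(X : P2)) (xx 1) = rho Q := by
    rw [hxx]; exact aeval_neg_neg Q
  have hx2 : aeval (-(X : P2)) (xx 2) = rho R := by
    rw [hxx]; exact aeval_neg_neg R
  have HL0 : brkt (gbrAB a b) xx eL 0 = d eL 0 := by
    rw [brkt_left_dec, hx0, hx1, hx2, b00 _ 0, b10 _ 0, b20 _ 0]
    simp only [gbrAB, Matrix.cons_val_zero, Matrix.cons_val_one, Matrix.head_cons,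
      Matrix.cons_val_two, Matrix.tail_cons, mul_zero, add_zero, zero_add]
    linear_combination -hF0
  have HL1 : brkt (gbrAB a b) xx eL 1 = d eL 1 := by
    rw [brkt_left_dec, hx0, hx1, hx2, b00 _ 1, b10 _ 1, b20 _ 1]
    simp only [gbrAB, Matrix.cons_val_zero, Matrix.cons_val_one, Matrix.head_cons,
      Matrix.cons_val_two, Matrix.tail_cons, mul_zero, add_zero, zero_add]
    linear_combination -hF1
  have HL2 : brkt (gbrAB a b) xx eL 2 = d eL 2 := by
    rw [brkt_left_dec, hx0, hx1, hx2, b00 _ 2, b10 _ 2, b20 _ 2]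
    simp only [gbrAB, Matrix.cons_val_zero, Matrix.cons_val_one, Matrix.head_cons,
      Matrix.cons_val_two, Matrix.tail_cons, mul_zero, add_zero, zero_add]
    linear_combination -hF2
  have HL : ∀ k', brkt (gbrAB a b) xx eL k' = d eL k' := by
    intro k'
    fin_cases k'
    · exact HL0
    · exact HL1
    · exact HL2
  have HY0 : brkt (gbrAB a b) xx eY 0 = d eY 0 := by
    rw [brkt_left_dec, hx0, hx1, hx2, b01 _ 0, b11 _ 0, b21 _ 0]
    simp only [gbrAB, Matrix.cons_val_zero, Matrix.cons_val_one, Matrix.head_cons,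
      Matrix.cons_val_two, Matrix.tail_cons, mul_zero, add_zero, zero_add]
    linear_combination -hY0
  have HY1 : brkt (gbrAB a b) xx eY 1 = d eY 1 := by
    rw [brkt_left_dec, hx0, hx1, hx2, b01 _ 1, b11 _ 1, b21 _ 1]
    simp only [gbrAB, Matrix.cons_val_zero, Matrix.cons_val_one, Matrix.head_cons,
      Matrix.cons_val_two, Matrix.tail_cons, mul_zero, add_zero, zero_add]
    linear_combination -hG1
  have HY2 : brkt (gbrAB a b) xx eY 2 = d eY 2 := by
    rw [brkt_left_dec, hx0, hx1, hx2, b01 _ 2, b11 _ 2, b21 _ 2]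
    simp only [gbrAB, Matrix.cons_val_zero, Matrix.cons_val_one, Matrix.head_cons,
      Matrix.cons_val_two, Matrix.tail_cons, mul_zero, add_zero, zero_add]
    linear_combination -hG2
  have HY : ∀ k', brkt (gbrAB a b) xx eY k' = d eY k' := by
    intro k'
    fin_cases k'
    · exact HY0
    · exact HY1
    · exact HY2
  have HM0 : brkt (gbrAB a b) xx eM 0 = d eM 0 := by
    rw [brkt_left_dec, hx0, hx1, hx2, b02 _ 0, b12 _ 0, b22 _ 0]
    simp only [gbrAB, Matrix.cons_val_zero, Matrix.cons_val_one, Matrix.head_cons,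
      Matrix.cons_val_two, Matrix.tail_cons, mul_zero, add_zero, zero_add]
    linear_combination -hM0
  have HM1 : brkt (gbrAB a b) xx eM 1 = d eM 1 := by
    rw [brkt_left_dec, hx0, hx1, hx2, b02 _ 1, b12 _ 1, b22 _ 1]
    simp only [gbrAB, Matrix.cons_val_zero, Matrix.cons_val_one, Matrix.head_cons,
      Matrix.cons_val_two, Matrix.tail_cons, mul_zero, add_zero, zero_add]
    linear_combination -hM1
  have HM2 : brkt (gbrAB a b) xx eM 2 = d eM 2 := by
    rw [brkt_left_dec, hx0, hx1, hx2, b02 _ 2, b12 _ 2, b22 _ 2]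
    simp only [gbrAB, Matrix.cons_val_zero, Matrix.cons_val_one, Matrix.head_cons,
      Matrix.cons_val_two, Matrix.tail_cons, mul_zero, add_zero, zero_add]
    linear_combination -hH2
  have HM : ∀ k', brkt (gbrAB a b) xx eM k' = d eM k' := by
    intro k'
    fin_cases k'
    · exact HM0
    · exact HM1
    · exact HM2
  refine ⟨xx, fun y => ?_⟩
  funext k
  rw [d_apply hd.1 y k, brkt_right_dec (gbrAB a b) xx y k,
    show ((X : P2) + C X) = C X + X from add_comm _ _, HL k, HY k, HM k]
end
end

section
/- Let c ∈ ℂ. Then every conformal derivation of TSV(c) is inner: for every conformal derivation d of TSV(c) there exists x ∈ TSV(c) such that d_λ(y) = [x_λ y] for all y ∈ TSV(c). -/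
noncomputable section
open Polynomial

namespace TSVinner
open Polynomial

def gen (i : Fin 3) : R3 := fun j => if j = i then 1 else 0

def cc2 : ℂ →+* P2 := C.comp C
def cc3 : ℂ →+* P3 := C.comp (C.comp C)
def ph2 (s : P2) : Polynomial ℂ →+* P2 := eval₂RingHom cc2 s
def ph3 (s : P3) : Polynomial ℂ →+* P3 := eval₂RingHom cc3 s
def Ev2 (s t : P2) : P2 →+* P2 := eval₂RingHom (ph2 s) t
def Ev3 (s t : P3) : P2 →+* P3 := eval₂RingHom (ph3 s) t
def Phi : Polynomial ℂ →+* P2 := mapRingHom C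
def Xi : P2 →+* Polynomial ℂ := eval₂RingHom (eval₂RingHom C (-X)) X
def eps0 : P3 →+* P2 := evalRingHom 0
def evl (e : ℂ) : P2 →+* Polynomial ℂ := evalRingHom (C e)

lemma ph2_C (s : P2) (a : ℂ) : ph2 s (C a) = C (C a) := by
  simp [ph2, cc2, coe_eval₂RingHom]

lemma ph2_X (s : P2) : ph2 s X = s := by simp [ph2, coe_eval₂RingHom]

lemma ph3_C (s : P3) (a : ℂ) : ph3 s (C a) = C (C (C a)) := by
  simp [ph3, cc3, coe_eval₂RingHom]

lemma ph3_X (s : P3) : ph3 s X = s := by simp [ph3, coe_eval₂RingHom]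

/-- sub2 as Ev3. -/
lemma sub2_eq (s : P3) (p : P2) : sub2 s p = Ev3 (C (C X)) s p := by
  have h : (Polynomial.C.comp Polynomial.C : Polynomial ℂ →+* P3) = ph3 (C (C X)) := by
    apply Polynomial.ringHom_ext
    · intro a; simp [ph3_C]
    · simp [ph3_X]
  simp [sub2, Ev3, coe_eval₂RingHom, h]

end TSVinner
namespace TSVinner

lemma d_zero {d : R3 → Fin 3 → P2} (h : ConfLinear d) : d 0 = 0 := by
  have := h.1 0 0
  simp only [add_zero] at this
  have h2 : d 0 + d 0 = d 0 + 0 := by rw [add_zero]; exact this.symm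
  exact (add_left_cancel h2)

lemma smul_c (a : ℂ) (x : R3) : (C a : Polynomial ℂ) • x = a • x := by
  funext i
  simp [Pi.smul_apply, Polynomial.smul_eq_C_mul]

lemma algmap2 (a : ℂ) : algebraMap ℂ P2 a = C (C a) := by
  rw [Polynomial.algebraMap_apply, Polynomial.algebraMap_apply]
  simp [Polynomial.algebraMap_apply]

lemma csmul_P2 (a : ℂ) (q : P2) : a • q = C (C a) * q := by
  rw [Algebra.smul_def, algmap2]

lemma d_psmul {d : R3 → Fin 3 → P2} (h : ConfLinear d) (p : Polynomial ℂ)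
    (x : R3) (k : Fin 3) : d (p • x) k = ph2 (C X + X) p * d x k := by
  induction p using Polynomial.induction_on with
  | C a =>
    rw [smul_c, h.2.1 a x, ph2_C]
    simp [Pi.smul_apply, csmul_P2]
  | add p q hp hq =>
    rw [add_smul, map_add, add_mul, ← hp, ← hq]
    have := congrFun (h.1 (p • x) (q • x)) k
    simpa using this
  | monomial n a ih =>
    have he : (C a * X ^ (n + 1)) • x = (X : Polynomial ℂ) • ((C a * X ^ n) • x) := by
      rw [← mul_smul]; ring_nf
    rw [he, h.2.2, ih]
    simp only [map_mul, map_pow, ph2_X]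
    ring

lemma mcoeff_eq (w : Fin 3 → P2) (n : ℕ) :
    mcoeff w n = ((w 0).coeff n) • gen 0 + (((w 1).coeff n) • gen 1 +
      ((w 2).coeff n) • gen 2) := by
  funext j
  fin_cases j <;> simp [mcoeff, gen]

lemma d_mcoeff {d : R3 → Fin 3 → P2} (h : ConfLinear d) (w : Fin 3 → P2)
    (n : ℕ) (k : Fin 3) :
    d (mcoeff w n) k = ∑ j : Fin 3, ph2 (C X + X) ((w j).coeff n) * d (gen j) k := by
  rw [mcoeff_eq, Fin.sum_univ_three]
  have h1 := congrFun (h.1 (((w 0).coeff n) • gen 0)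
    (((w 1).coeff n) • gen 1 + ((w 2).coeff n) • gen 2)) k
  have h2 := congrFun (h.1 (((w 1).coeff n) • gen 1) (((w 2).coeff n) • gen 2)) k
  simp only [Pi.add_apply] at h1 h2
  rw [h1, h2, d_psmul h, d_psmul h, d_psmul h]
  ring

end TSVinner
namespace TSVinner

lemma Ev3_CC (s t : P3) (q : Polynomial ℂ) : Ev3 s t (C q) = ph3 s q := by
  simp [Ev3, coe_eval₂RingHom]

lemma Ev3_X (s t : P3) : Ev3 s t (X : P2) = t := by simp [Ev3, coe_eval₂RingHom]

lemma support_subset_msupp (w : Fin 3 → P2) (j : Fin 3) : (w j).support ⊆ msupp w :=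
  Finset.subset_biUnion_of_mem (fun i => (w i).support) (Finset.mem_univ j)

lemma sum_eval₂ (F : Polynomial ℂ →+* P3) (t : P3) (w : Fin 3 → P2) (j : Fin 3) :
    ∑ n ∈ msupp w, t ^ n * F ((w j).coeff n) = eval₂ F t (w j) := by
  have h1 : ∑ n ∈ msupp w, t ^ n * F ((w j).coeff n)
      = ∑ n ∈ (w j).support, t ^ n * F ((w j).coeff n) :=
    (Finset.sum_subset (support_subset_msupp w j) (fun n _ hn => by
      rw [Polynomial.notMem_support_iff.mp hn, map_zero, mul_zero])).symm
  rw [h1, eval₂_eq_sum, Polynomial.sum_def]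
  exact Finset.sum_congr rfl fun n _ => by ring

lemma aeval_gen (v : P2) (b j : Fin 3) :
    aeval v (gen b j) = if j = b then 1 else 0 := by
  by_cases hj : j = b <;> simp [gen, hj]

lemma brkt_gen_left (g : Fin 3 → Fin 3 → Fin 3 → P2) (x : R3) (b k : Fin 3) :
    brkt g x (gen b) k = ∑ i : Fin 3, aeval (-(X : P2)) (x i) * g i b k := by
  unfold brkt
  refine Finset.sum_congr rfl fun i _ => ?_
  simp [aeval_gen, mul_ite, ite_mul]

lemma brkt_gen_right (g : Fin 3 → Fin 3 → Fin 3 → P2) (y : R3) (a k : Fin 3) :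
    brkt g (gen a) y k = ∑ j : Fin 3, aeval ((X : P2) + C X) (y j) * g a j k := by
  unfold brkt
  rw [Finset.sum_comm]
  refine Finset.sum_congr rfl fun j _ => ?_
  simp [aeval_gen, mul_ite, ite_mul]

lemma brkt_gen_gen (g : Fin 3 → Fin 3 → Fin 3 → P2) (a b k : Fin 3) :
    brkt g (gen a) (gen b) k = g a b k := by
  rw [brkt_gen_left]
  simp [aeval_gen, ite_mul]

lemma hcomp1 (q : Polynomial ℂ) :
    Ev3 (C (C X)) (C X) (ph2 (C X + X) q) = ph3 (C (C X) + C X) q := by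
  have h : (Ev3 (C (C X)) (C X)).comp (ph2 (C X + X)) = ph3 (C (C X) + C X) := by
    apply Polynomial.ringHom_ext
    · intro a
      rw [RingHom.comp_apply, ph2_C, ph3_C, Ev3_CC, ph3_C]
    · rw [RingHom.comp_apply, ph2_X, ph3_X, map_add, Ev3_CC, ph3_X, Ev3_X]
  exact congrFun (congrArg (fun f => f.toFun) h) q

lemma hcomp2 (q : Polynomial ℂ) :
    Ev3 (C (C X)) (C X + X) (aeval (-(X : P2)) q) = ph3 (-(C X + X)) q := by
  have h : (Ev3 (C (C X)) (C X + X)).comp ((aeval (-(X : P2))).toRingHom : Polynomial ℂ →+* P2)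
      = ph3 (-(C X + X)) := by
    apply Polynomial.ringHom_ext
    · intro a
      show Ev3 (C (C X)) (C X + X) (aeval (-(X : P2)) (C a)) = _
      rw [aeval_C, algmap2, Ev3_CC, ph3_C, ph3_C]
    · show Ev3 (C (C X)) (C X + X) (aeval (-(X : P2)) X) = _
      rw [aeval_X, map_neg, Ev3_X, ph3_X]
  exact congrFun (congrArg (fun f => f.toFun) h) q

lemma hcomp3 (q : Polynomial ℂ) :
    Ev3 (C (C X)) X (aeval ((X : P2) + C X) q) = ph3 (C (C X) + X) q := by
  have h : (Ev3 (C (C X)) X).comp ((aeval ((X : P2) + C X)).toRingHom : Polynomial ℂ →+* P2)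
      = ph3 (C (C X) + X) := by
    apply Polynomial.ringHom_ext
    · intro a
      show Ev3 (C (C X)) X (aeval ((X : P2) + C X) (C a)) = _
      rw [aeval_C, algmap2, Ev3_CC, ph3_C, ph3_C]
    · show Ev3 (C (C X)) X (aeval ((X : P2) + C X) X) = _
      rw [aeval_X, map_add, Ev3_X, Ev3_CC, ph3_X, ph3_X]
      ring
  exact congrFun (congrArg (fun f => f.toFun) h) q

lemma sum1 {d : R3 → Fin 3 → P2} (h : ConfLinear d) (w : Fin 3 → P2) (k : Fin 3) :
    (∑ n ∈ msupp w, (X : P3) ^ n * sub2 (C X) (d (mcoeff w n) k))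
    = ∑ j : Fin 3, Ev3 (C (C X) + C X) X (w j) * Ev3 (C (C X)) (C X) (d (gen j) k) := by
  have step : ∀ n, (X : P3) ^ n * sub2 (C X) (d (mcoeff w n) k)
      = ∑ j : Fin 3, ((X : P3) ^ n * ph3 (C (C X) + C X) ((w j).coeff n))
          * Ev3 (C (C X)) (C X) (d (gen j) k) := by
    intro n
    rw [sub2_eq, d_mcoeff h, map_sum, Finset.mul_sum]
    refine Finset.sum_congr rfl fun j _ => ?_
    rw [map_mul, hcomp1]
    ring
  rw [Finset.sum_congr rfl fun n _ => step n, Finset.sum_comm]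
  refine Finset.sum_congr rfl fun j _ => ?_
  rw [← Finset.sum_mul, sum_eval₂ (ph3 (C (C X) + C X)) X w j]
  rfl

lemma sum2 (g : Fin 3 → Fin 3 → Fin 3 → P2) (v : Fin 3 → P2) (b k : Fin 3) :
    (∑ m ∈ msupp v, (C (X : P2) : P3) ^ m * sub2 (C X + X) (brkt g (mcoeff v m) (gen b) k))
    = ∑ i : Fin 3, Ev3 (-(C X + X)) (C X) (v i) * Ev3 (C (C X)) (C X + X) (g i b k) := by
  have step : ∀ m, (C (X : P2) : P3) ^ m * sub2 (C X + X) (brkt g (mcoeff v m) (gen b) k)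
      = ∑ i : Fin 3, ((C (X : P2) : P3) ^ m * ph3 (-(C X + X)) ((v i).coeff m))
          * Ev3 (C (C X)) (C X + X) (g i b k) := by
    intro m
    rw [brkt_gen_left, sub2_eq, map_sum, Finset.mul_sum]
    refine Finset.sum_congr rfl fun i _ => ?_
    rw [map_mul, hcomp2]
    simp only [mcoeff]
    ring
  rw [Finset.sum_congr rfl fun m _ => step m, Finset.sum_comm]
  refine Finset.sum_congr rfl fun i _ => ?_
  rw [← Finset.sum_mul, sum_eval₂ (ph3 (-(C X + X))) (C X) v i]
  rfl

lemma sum3 (g : Fin 3 → Fin 3 → Fin 3 → P2) (v : Fin 3 → P2) (a k : Fin 3) :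
    (∑ m ∈ msupp v, (C (X : P2) : P3) ^ m * sub2 X (brkt g (gen a) (mcoeff v m) k))
    = ∑ j : Fin 3, Ev3 (C (C X) + X) (C X) (v j) * Ev3 (C (C X)) X (g a j k) := by
  have step : ∀ m, (C (X : P2) : P3) ^ m * sub2 X (brkt g (gen a) (mcoeff v m) k)
      = ∑ j : Fin 3, ((C (X : P2) : P3) ^ m * ph3 (C (C X) + X) ((v j).coeff m))
          * Ev3 (C (C X)) X (g a j k) := by
    intro m
    rw [brkt_gen_right, sub2_eq, map_sum, Finset.mul_sum]
    refine Finset.sum_congr rfl fun j _ => ?_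
    rw [map_mul, hcomp3]
    simp only [mcoeff]
    ring
  rw [Finset.sum_congr rfl fun m _ => step m, Finset.sum_comm]
  refine Finset.sum_congr rfl fun j _ => ?_
  rw [← Finset.sum_mul, sum_eval₂ (ph3 (C (C X) + X)) (C X) v j]
  rfl

lemma star {c : ℂ} {d : R3 → Fin 3 → P2} (hd : IsConfDer (gbrC c) d) (a b k : Fin 3) :
    (∑ j : Fin 3, Ev3 (C (C X) + C X) X (gbrC c a b j) * Ev3 (C (C X)) (C X) (d (gen j) k))
    = (∑ i : Fin 3, Ev3 (-(C X + X)) (C X) (d (gen a) i) * Ev3 (C (C X)) (C X + X) (gbrC c i b k))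
      + ∑ j : Fin 3, Ev3 (C (C X) + X) (C X) (d (gen b) j) * Ev3 (C (C X)) X (gbrC c a j k) := by
  have h := hd.2 (gen a) (gen b) k
  have hw : brkt (gbrC c) (gen a) (gen b) = fun k' => gbrC c a b k' :=
    funext fun k' => brkt_gen_gen (gbrC c) a b k'
  rw [hw] at h
  rw [sum1 hd.1 (fun k' => gbrC c a b k') k, sum2 (gbrC c) (d (gen a)) b k,
    sum3 (gbrC c) (d (gen b)) a k] at h
  exact h

end TSVinner
namespace TSVinner

lemma Ev2_CC (s t : P2) (q : Polynomial ℂ) : Ev2 s t (C q) = ph2 s q := by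
  simp [Ev2, coe_eval₂RingHom]

lemma Ev2_X (s t : P2) : Ev2 s t (X : P2) = t := by simp [Ev2, coe_eval₂RingHom]

lemma eps0_C (t : P2) : eps0 (C t) = t := by simp [eps0]

lemma eps0_X : eps0 (X : P3) = 0 := by simp [eps0]

lemma eps0_Ev3 (s t : P3) (p : P2) : eps0 (Ev3 s t p) = Ev2 (eps0 s) (eps0 t) p := by
  have h0 : eps0 (Ev3 s t p) = eval₂ (eps0.comp (ph3 s)) (eps0 t) p := by
    rw [Ev3, coe_eval₂RingHom, Polynomial.hom_eval₂]
  rw [h0]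
  have h1 : eps0.comp (ph3 s) = ph2 (eps0 s) := by
    apply Polynomial.ringHom_ext
    · intro a
      rw [RingHom.comp_apply, ph3_C, ph2_C, eps0_C]
    · rw [RingHom.comp_apply, ph3_X, ph2_X]
  rw [h1, Ev2, coe_eval₂RingHom]

lemma Ev2_id (p : P2) : Ev2 (C X) X p = p := by
  have h1 : ph2 (C X) = (C : Polynomial ℂ →+* P2) := by
    apply Polynomial.ringHom_ext
    · intro a; rw [ph2_C]
    · rw [ph2_X]
  rw [Ev2, coe_eval₂RingHom, h1]
  rw [eval₂_eq_sum]
  exact Polynomial.sum_C_mul_X_pow_eq p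

lemma Phi_X : Phi (X : Polynomial ℂ) = X := by simp [Phi]

lemma Phi_C (a : ℂ) : Phi (C a) = C (C a) := by simp [Phi]

lemma Phi_Xi (p : P2) : Phi (Xi p) = Ev2 (-X) X p := by
  have h0 : Phi (Xi p) = eval₂ (Phi.comp (eval₂RingHom C (-X))) (Phi X) p := by
    rw [Xi, coe_eval₂RingHom, Polynomial.hom_eval₂]
  rw [h0, Phi_X]
  have h1 : Phi.comp (eval₂RingHom (C : ℂ →+* Polynomial ℂ) (-X)) = ph2 (-X) := by
    apply Polynomial.ringHom_ext
    · intro a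
      rw [RingHom.comp_apply, coe_eval₂RingHom, eval₂_C, Phi_C, ph2_C]
    · rw [RingHom.comp_apply, coe_eval₂RingHom, eval₂_X, map_neg, Phi_X, ph2_X]
  rw [h1, Ev2, coe_eval₂RingHom]

lemma evl_Phi (e : ℂ) (p : Polynomial ℂ) : evl e (Phi p) = C (p.eval e) := by
  show eval (C e) (map C p) = C (p.eval e)
  rw [eval_map, Polynomial.eval₂_at_apply]

lemma evl_X (e : ℂ) : evl e (X : P2) = C e := by simp [evl]

lemma evl_C (e : ℂ) (q : Polynomial ℂ) : evl e (C q) = q := by simp [evl]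

end TSVinner
namespace TSVinner

lemma eps0_negCX : eps0 (-(C (X : P2) + X) : P3) = -X := by simp [eps0]

lemma hne_CXX : (C X + X : P2) ≠ 0 := by
  intro h
  have := congrArg (fun p : P2 => p.coeff 1) h
  simp [Polynomial.coeff_C] at this

lemma ne_of_coeff1 {R : Type*} [Semiring R] (p : Polynomial R) (h1 : p.coeff 1 ≠ 0) :
    p ≠ 0 := fun h => h1 (by rw [h]; simp)

lemma hne_factor2 (c : ℂ) : (-((C X : P2) + X) - 2 * C (C c) : P2) ≠ 0 := by
  intro h
  have := congrArg (fun p : P2 => p.coeff 1) h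
  simp [Polynomial.coeff_C] at this

lemma hne_XCC (q : Polynomial ℂ) : (X + C q : P2) ≠ 0 := by
  intro h
  have := congrArg (fun p : P2 => p.coeff 1) h
  simp [Polynomial.coeff_C] at this

lemma algC : (algebraMap ℂ P2) = cc2 := RingHom.ext fun a => algmap2 a

lemma aeval_ph2 (q : Polynomial ℂ) : aeval ((X : P2) + C X) q = ph2 (C X + X) q := by
  rw [aeval_def, algC, add_comm (X : P2) (C X), ph2, coe_eval₂RingHom]

lemma aevalX_phi (f : Polynomial ℂ) : aeval (X : P2) f = Phi f := by
  induction f using Polynomial.induction_on with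
  | C a => rw [aeval_C, algmap2, Phi_C]
  | add p q hp hq => rw [map_add, map_add, hp, hq]
  | monomial n a ih =>
    simp only [map_mul, map_pow, aeval_X, aeval_C, algmap2, Phi_X, Phi_C] at *

lemma aeval_neg_comp (f : Polynomial ℂ) :
    aeval (-(X : P2)) (f.comp (-X)) = Phi f := by
  rw [Polynomial.aeval_comp]
  simp only [map_neg, aeval_X, neg_neg]
  exact aevalX_phi f

lemma y_decomp (y : R3) : y = (y 0) • gen 0 + ((y 1) • gen 1 + (y 2) • gen 2) := by
  funext j
  fin_cases j <;> simp [gen]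

end TSVinner
open TSVinner in
set_option maxHeartbeats 2000000 in
/-- For every c ∈ ℂ, every conformal derivation of TSV(c) is
inner, i.e. of the form (ad x)_λ y = [x_λ y] for some x ∈ TSV(c). -/
theorem TSVc_conformal_derivations_inner (c : ℂ)
    (d : R3 → Fin 3 → P2) (hd : IsConfDer (gbrC c) d) :
    ∃ x : R3, ∀ y : R3, d y = brkt (gbrC c) x y := by
  classical
  have h0 := congrArg eps0 (star hd 0 1 0)
  have h1 := congrArg eps0 (star hd 1 1 0)
  have h2 := congrArg eps0 (star hd 1 1 1)
  have h3 := congrArg eps0 (star hd 0 0 0)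
  have h4 := congrArg eps0 (star hd 0 1 1)
  have h5 := congrArg eps0 (star hd 0 2 2)
  have h6 := congrArg eps0 (star hd 0 0 1)
  have h7 := congrArg eps0 (star hd 0 1 2)
  have h8 := congrArg eps0 (star hd 0 0 2)
  simp only [Fin.sum_univ_three] at h0 h1 h2 h3 h4 h5 h6 h7 h8
  simp only [gbrC, Matrix.cons_val_zero, Matrix.cons_val_one, Matrix.head_cons,
    Matrix.cons_val_two, Matrix.tail_cons] at h0 h1 h2 h3 h4 h5 h6 h7 h8
  simp only [map_add, map_mul, map_neg, map_zero, map_one, map_ofNat, mul_zero, zero_mul,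
    add_zero, zero_add, map_sub, Ev2_CC, Ev2_X, ph2_C, ph2_X, eps0_Ev3, eps0_C, eps0_X,
    Ev3_CC, Ev3_X, ph3_C, ph3_X, Ev2_id, eps0_negCX, ← Phi_Xi] at h0 h1 h2 h3 h4 h5 h6 h7 h8
  -- A10 = 0
  have hA10 : d (gen 1) 0 = 0 := by
    have hz : (X + C (C c)) * d (gen 1) 0 = 0 := by linear_combination h0
    rcases mul_eq_zero.mp hz with h | h
    · exact absurd h (hne_XCC (C c))
    · exact h
  -- A20 = 0
  have hA20 : d (gen 2) 0 = 0 := by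
    rcases mul_eq_zero.mp h1 with h | h
    · rcases mul_eq_zero.mp h with h' | h'
      · exact absurd h' hne_CXX
      · exact absurd h' (hne_factor2 c)
    · exact h
  -- A21 = 0
  rw [hA10] at h2
  simp only [map_zero, zero_mul, mul_zero, add_zero, zero_add] at h2
  have hA21 : d (gen 2) 1 = 0 := by
    rcases mul_eq_zero.mp h2 with h | h
    · rcases mul_eq_zero.mp h with h' | h'
      · exact absurd h' hne_CXX
      · exact absurd h' (hne_factor2 c)
    · exact h
  -- A00, A11, A22
  have e0 : X * d (gen 0) 0 = Phi (Xi (d (gen 0) 0)) * (C X + 2 * X) := by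
    linear_combination h3
  have r0 : (Xi (d (gen 0) 0)).IsRoot 0 := by
    have hh := congrArg (evl 0) e0
    simp only [map_mul, map_add, map_sub, map_neg, evl_X, evl_C, evl_Phi, map_ofNat,
      Polynomial.C_0, zero_mul, mul_zero, add_zero] at hh
    rcases mul_eq_zero.mp hh.symm with h | h
    · exact Polynomial.C_eq_zero.mp h
    · exact absurd h Polynomial.X_ne_zero
  obtain ⟨ψ, hψ⟩ := Polynomial.dvd_iff_isRoot.mpr r0
  rw [Polynomial.C_0, sub_zero] at hψ
  have hA00 : d (gen 0) 0 = Phi ψ * (C X + 2 * X) := by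
    apply mul_left_cancel₀ (Polynomial.X_ne_zero : (X : P2) ≠ 0)
    rw [e0, hψ]
    simp only [map_mul, Phi_X]
    ring
  have e4 : X * d (gen 1) 1
      = Phi (Xi (d (gen 0) 0)) * (C X + C (C (3/2)) * X + C (C c)) := by
    linear_combination h4
  have hA11 : d (gen 1) 1 = Phi ψ * (C X + C (C (3/2)) * X + C (C c)) := by
    apply mul_left_cancel₀ (Polynomial.X_ne_zero : (X : P2) ≠ 0)
    rw [e4, hψ]
    simp only [map_mul, Phi_X]
    ring
  have e5 : X * d (gen 2) 2 = Phi (Xi (d (gen 0) 0)) * (C X + 2 * C (C c)) := by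
    linear_combination h5
  have hA22 : d (gen 2) 2 = Phi ψ * (C X + 2 * C (C c)) := by
    apply mul_left_cancel₀ (Polynomial.X_ne_zero : (X : P2) ≠ 0)
    rw [e5, hψ]
    simp only [map_mul, Phi_X]
    ring
  -- A01, A12
  have e6 : (X - C (C c)) * d (gen 0) 1
      = Phi (Xi (d (gen 0) 1)) * (C (C (1/2)) * C X + C (C (3/2)) * X - C (C c)) := by
    linear_combination h6
  have r1 : (Xi (d (gen 0) 1)).IsRoot c := by
    have hh := congrArg (evl c) e6
    simp only [map_mul, map_add, map_sub, map_neg, evl_X, evl_C, evl_Phi, map_ofNat,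
      sub_self, zero_mul] at hh
    rcases mul_eq_zero.mp hh.symm with h | h
    · exact Polynomial.C_eq_zero.mp h
    · exfalso
      refine ne_of_coeff1 _ ?_ h
      simp [Polynomial.coeff_C, Polynomial.coeff_C_mul]
  obtain ⟨χ, hχ⟩ := Polynomial.dvd_iff_isRoot.mpr r1
  have hA01 : d (gen 0) 1 = Phi χ * (C (C (1/2)) * C X + C (C (3/2)) * X - C (C c)) := by
    apply mul_left_cancel₀ (Polynomial.X_sub_C_ne_zero (C c : Polynomial ℂ))
    rw [e6, hχ]
    simp only [map_mul, map_sub, Phi_X, Phi_C]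
    ring
  have e7 : (X - C (C c)) * d (gen 1) 2
      = Phi (Xi (d (gen 0) 1)) * ((C X + 2 * X) * (-(C X : P2) - 2 * C (C c))) := by
    linear_combination h7
  have hA12 : d (gen 1) 2 = Phi χ * ((C X + 2 * X) * (-(C X : P2) - 2 * C (C c))) := by
    apply mul_left_cancel₀ (Polynomial.X_sub_C_ne_zero (C c : Polynomial ℂ))
    rw [e7, hχ]
    simp only [map_mul, map_sub, Phi_X, Phi_C]
    ring
  -- A02
  have e8 : (X - 2 * C (C c)) * d (gen 0) 2
      = Phi (Xi (d (gen 0) 2)) * (-(C X : P2) - 2 * C (C c)) := by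
    linear_combination h8
  have r2 : (Xi (d (gen 0) 2)).IsRoot (2 * c) := by
    have hh := congrArg (evl (2 * c)) e8
    simp only [map_mul, map_add, map_sub, map_neg, evl_X, evl_C, evl_Phi, map_ofNat] at hh
    rw [sub_self, zero_mul] at hh
    rcases mul_eq_zero.mp hh.symm with h | h
    · exact Polynomial.C_eq_zero.mp h
    · exfalso
      refine ne_of_coeff1 _ ?_ h
      simp [Polynomial.coeff_C]
  obtain ⟨ρ, hρ⟩ := Polynomial.dvd_iff_isRoot.mpr r2
  have hne2c : (X - 2 * C (C c) : P2) ≠ 0 := by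
    rw [show (2 * C (C c) : P2) = C (2 * C c) by rw [map_mul, map_ofNat]]
    exact Polynomial.X_sub_C_ne_zero (2 * C c)
  have hA02 : d (gen 0) 2 = Phi ρ * (-(C X : P2) - 2 * C (C c)) := by
    apply mul_left_cancel₀ hne2c
    rw [e8, hρ]
    simp only [map_mul, map_sub, map_ofNat, Phi_X, Phi_C]
    ring
  -- conclusion
  refine ⟨![ψ.comp (-X), χ.comp (-X), ρ.comp (-X)], fun y => ?_⟩
  have hy : ∀ k, d y k = ph2 (C X + X) (y 0) * d (gen 0) k
      + (ph2 (C X + X) (y 1) * d (gen 1) k + ph2 (C X + X) (y 2) * d (gen 2) k) := by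
    intro k
    conv_lhs => rw [y_decomp y]
    have ha := congrFun (hd.1.1 ((y 0) • gen 0) ((y 1) • gen 1 + (y 2) • gen 2)) k
    have hb := congrFun (hd.1.1 ((y 1) • gen 1) ((y 2) • gen 2)) k
    simp only [Pi.add_apply] at ha hb
    rw [ha, hb, d_psmul hd.1, d_psmul hd.1, d_psmul hd.1]
  have c0 : d y 0 = brkt (gbrC c) ![ψ.comp (-X), χ.comp (-X), ρ.comp (-X)] y 0 := by
    rw [hy 0]
    simp only [brkt, Fin.sum_univ_three, gbrC, Matrix.cons_val_zero, Matrix.cons_val_one,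
      Matrix.head_cons, Matrix.cons_val_two, Matrix.tail_cons, aeval_neg_comp, aeval_ph2,
      mul_zero, zero_mul, add_zero, zero_add, map_mul, map_add, map_sub, map_neg, map_ofNat, hA00, hA10, hA20]
    ring
  have c1 : d y 1 = brkt (gbrC c) ![ψ.comp (-X), χ.comp (-X), ρ.comp (-X)] y 1 := by
    rw [hy 1]
    simp only [brkt, Fin.sum_univ_three, gbrC, Matrix.cons_val_zero, Matrix.cons_val_one,
      Matrix.head_cons, Matrix.cons_val_two, Matrix.tail_cons, aeval_neg_comp, aeval_ph2,
      mul_zero, zero_mul, add_zero, zero_add, map_mul, map_add, map_sub, map_neg, map_ofNat, hA01, hA11, hA21]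
    ring
  have c2 : d y 2 = brkt (gbrC c) ![ψ.comp (-X), χ.comp (-X), ρ.comp (-X)] y 2 := by
    rw [hy 2]
    simp only [brkt, Fin.sum_univ_three, gbrC, Matrix.cons_val_zero, Matrix.cons_val_one,
      Matrix.head_cons, Matrix.cons_val_two, Matrix.tail_cons, aeval_neg_comp, aeval_ph2,
      mul_zero, zero_mul, add_zero, zero_add, map_mul, map_add, map_sub, map_neg, map_ofNat, hA02, hA12, hA22]
    ring
  funext k
  fin_cases k
  · exact c0
  · exact c1
  · exact c2
end
end

section
/- Let P ∈ ℂ[λ] be a polynomial satisfying (λ+2μ)P(λ) − (μ+2λ)P(μ) = (λ−μ)P(λ+μ) as an identity of polynomials in the two indeterminates λ and μ. Then there exist a₁, a₃ ∈ ℂ such that P(λ) = a₁λ + a₃λ³. -/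
/-!
Statement 19: if P ∈ ℂ[λ] satisfies (λ+2μ)P(λ) − (μ+2λ)P(μ) = (λ−μ)P(λ+μ)
as an identity of polynomials in the indeterminates λ, μ, then
P(λ) = a₁λ + a₃λ³ for some a₁, a₃ ∈ ℂ.
Variables: λ = X 0, μ = X 1 in `MvPolynomial (Fin 2) ℂ`.
-/

open MvPolynomial

theorem virasoro_cocycle_LL (P : Polynomial ℂ)
    (h : (X 0 + 2 * X 1) * Polynomial.aeval (X 0 : MvPolynomial (Fin 2) ℂ) P
          - (X 1 + 2 * X 0) * Polynomial.aeval (X 1 : MvPolynomial (Fin 2) ℂ) P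
        = (X 0 - X 1) * Polynomial.aeval ((X 0 + X 1 : MvPolynomial (Fin 2) ℂ)) P) :
    ∃ a₁ a₃ : ℂ, P = Polynomial.C a₁ * Polynomial.X + Polynomial.C a₃ * Polynomial.X ^ 3 := by
  have h2 : (MvPolynomial.pderiv (R := ℂ) (1 : Fin 2)) 2 = 0 := by
    rw [(map_ofNat (MvPolynomial.C (σ := Fin 2)) 2).symm]; exact pderiv_C
  have h1 := congrArg (fun q => (MvPolynomial.aeval
      (fun i : Fin 2 => if i = 0 then (Polynomial.X : Polynomial ℂ) else 0))
      (MvPolynomial.pderiv (R := ℂ) (1 : Fin 2) q)) h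
  simp only [Derivation.leibniz, Derivation.map_aeval, map_add, map_sub, map_mul,
    pderiv_X_self, pderiv_X_of_ne (by decide : (0:Fin 2) ≠ 1), smul_eq_mul, h2,
    map_smul, aeval_X, ← Polynomial.aeval_algHom_apply] at h1
  simp at h1
  simp only [← Polynomial.coeff_zero_eq_aeval_zero', Polynomial.algebraMap_eq] at h1
  -- h1 : P * 2 - (2 * X * C (P'.coeff 0) + C (P.coeff 0)) = X * derivative P + -P
  have h3 : 3*P = Polynomial.X * Polynomial.derivative P
      + Polynomial.X * (2 * Polynomial.C ((Polynomial.derivative P).coeff 0))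
      + Polynomial.C (P.coeff 0) := by linear_combination h1
  refine ⟨P.coeff 1, P.coeff 3, ?_⟩
  ext n
  match n with
  | 0 =>
    have hc := congrArg (fun q => Polynomial.coeff q 0) h3
    simp at hc ⊢
    linear_combination hc/2
  | 1 => simp
  | 2 =>
    have hc := congrArg (fun q => Polynomial.coeff q (1+1)) h3
    simp [Polynomial.coeff_X_mul, Polynomial.coeff_derivative, Polynomial.coeff_C] at hc ⊢
    linear_combination hc
  | 3 => simp
  | (n+4) =>
    have hc := congrArg (fun q => Polynomial.coeff q (n+3+1)) h3
    simp [Polynomial.coeff_X_mul, Polynomial.coeff_derivative, Polynomial.coeff_C] at hc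
    have hz : Polynomial.coeff P (n+3+1) * ((n:ℂ)+1) = 0 := by
      linear_combination -hc
    have hn : ((n:ℂ)+1) ≠ 0 := by exact_mod_cast Nat.succ_ne_zero n
    have hz' : Polynomial.coeff P (n+4) = 0 := by
      rcases mul_eq_zero.mp hz with h' | h'
      · exact h'
      · exact absurd h' hn
    simp [hz', Polynomial.coeff_X_pow]
end
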